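/- For a graph G and integer t ≥ 1, G is a CM_t graph if and only if G is unmixed and for every vertex v of G, the induced subgraph G \ N[v] is a CM_{t-1} graph. -/

import Mathlib

set_option synthInstance.maxHeartbeats 1000000
set_option maxHeartbeats 1000000
open Classical
noncomputable section

/-- A (abstract) simplicial complex on vertex type `V`: a downward-closed
set of finite sets containing the empty set when nonempty is not required;
we only require downward closure. -/
def IsComplex {V : Type} (Δ : Set (Finset V)) : Prop :=
  ∀ F ∈ Δ, ∀ G : Finset V, G ⊆ F → G ∈ Δ

/-- `F` is a facet (maximal face) of `Δ`. -/
def IsFacet {V : Type} (Δ : Set (Finset V)) (F : Finset V) : Prop :=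
  F ∈ Δ ∧ ∀ G ∈ Δ, F ⊆ G → F = G

/-- A complex is pure if all facets have the same cardinality. -/
def IsPure {V : Type} (Δ : Set (Finset V)) : Prop :=
  ∀ F G : Finset V, IsFacet Δ F → IsFacet Δ G → F.card = G.card

/-- `Δ` has dimension `d - 1` iff the largest cardinality of a face is `d`. -/
def HasDimCard {V : Type} [Fintype V] (Δ : Set (Finset V)) (d : ℕ) : Prop :=
  (∃ F ∈ Δ, F.card = d) ∧ ∀ F ∈ Δ, F.card ≤ d

/-- The link of a face `F` in `Δ`. -/
def linkC {V : Type} (Δ : Set (Finset V)) (F : Finset V) : Set (Finset V) :=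
  { G | Disjoint G F ∧ G ∪ F ∈ Δ }

/-- The Stanley-Reisner ideal of `Δ` over `k`: generated by the monomials
supported on the non-faces of `Δ`. -/
def SRIdeal (k : Type) [Field k] {V : Type} [Fintype V] (Δ : Set (Finset V)) :
    Ideal (MvPolynomial V k) :=
  Ideal.span { m | ∃ F : Finset V, F ∉ Δ ∧ m = ∏ v ∈ F, MvPolynomial.X v }

/-- The Stanley-Reisner ring `k[Δ]`. -/
abbrev SRRing (k : Type) [Field k] {V : Type} [Fintype V] (Δ : Set (Finset V)) :=
  MvPolynomial V k ⧸ SRIdeal k Δ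

/-- `Δ` is Cohen-Macaulay over `k` iff its Stanley-Reisner ring admits a
regular sequence, contained in the irrelevant maximal ideal, whose length is
the Krull dimension of the ring (i.e. depth = dimension). -/
def IsCM (k : Type) [Field k] {V : Type} [Fintype V] (Δ : Set (Finset V)) : Prop :=
  ∃ rs : List (SRRing k Δ),
    (∀ r ∈ rs, r ∈ Ideal.span
      (Set.range fun v : V => Ideal.Quotient.mk (SRIdeal k Δ) (MvPolynomial.X v))) ∧
    RingTheory.Sequence.IsRegular (SRRing k Δ) rs ∧
    (rs.length : WithBot (WithTop ℕ)) = ringKrullDim (SRRing k Δ)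

/-- `Δ` is `CM_t` over `k`: pure, and the link of every face of cardinality
at least `t` is Cohen-Macaulay over `k`. -/
def IsCMt (k : Type) [Field k] {V : Type} [Fintype V] (Δ : Set (Finset V)) (t : ℕ) : Prop :=
  IsPure Δ ∧ ∀ F ∈ Δ, t ≤ F.card → IsCM k (linkC Δ F)

/-- The independence complex of a graph. -/
def indC {V : Type} (G : SimpleGraph V) : Set (Finset V) :=
  { F | ∀ u ∈ F, ∀ v ∈ F, ¬ G.Adj u v }

/-- A graph is unmixed if its independence complex is pure. -/
def Unmixed {V : Type} (G : SimpleGraph V) : Prop := IsPure (indC G)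

/-- The closed neighborhood `N[v]` of a vertex. -/
def closedNbhd {V : Type} (G : SimpleGraph V) (v : V) : Set V :=
  insert v (G.neighborSet v)

/-- The induced subgraph `G \ N[v]` on the complement of the closed
neighborhood of `v`. -/
def delNbhd {V : Type} (G : SimpleGraph V) (v : V) :
    SimpleGraph ((closedNbhd G v)ᶜ : Set V) :=
  SimpleGraph.induce _ G

/-- A pure order of a bipartite graph `G`, given by labelings
`x y : Fin n → V` of the two parts. -/
def IsPureOrder {V : Type} (G : SimpleGraph V) {n : ℕ} (x y : Fin n → V) : Prop :=
  Function.Bijective (Sum.elim x y) ∧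
  (∀ i j : Fin n, ¬ G.Adj (x i) (x j)) ∧
  (∀ i j : Fin n, ¬ G.Adj (y i) (y j)) ∧
  (∀ i : Fin n, G.Adj (x i) (y i)) ∧
  (∀ i j k : Fin n, i ≠ j → j ≠ k → i ≠ k →
    G.Adj (x i) (y j) → G.Adj (x j) (y k) → G.Adj (x i) (y k))

noncomputable instance fintypeOfSetCompl {V : Type} [Fintype V] (s : Set V) : Fintype s :=
  s.toFinite.fintype

/-- The join of two simplicial complexes on disjoint vertex sets. -/
def joinC {V W : Type} (Δ : Set (Finset V)) (Δ' : Set (Finset W)) :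
    Set (Finset (V ⊕ W)) :=
  { F | ∃ A ∈ Δ, ∃ B ∈ Δ',
      F = A.map ⟨Sum.inl, Sum.inl_injective⟩ ∪ B.map ⟨Sum.inr, Sum.inr_injective⟩ }

end

/-!
A face of `lk_Δ v` is a face `H ∌ v` of `Δ` with `insert v H ∈ Δ`, and
`lk_{lk_Δ v} H = lk_Δ (insert v H)`. Every face of size `≥ t ≥ 1` arises in this way, and
links of pure complexes are pure, so `Δ` is `CM_t` iff it is pure and all vertex links are
`CM_{t-1}`.

For `Δ = Ind(G)` the vertex link `lk v` is `Ind(G \ N[v])`, transported along the inclusion of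
the vertices outside `N[v]`. Transport along an injection changes neither purity nor links, nor
the Stanley-Reisner ring: the variables of the new vertices are non-faces, hence vanish.
-/

open MvPolynomial

theorem Finset.exists_map_eq_of_coe_subset_range {V W : Type} (ι : W ↪ V) {F : Finset V}
    (hF : (F : Set V) ⊆ Set.range ι) : ∃ B : Finset W, B.map ι = F :=
  ⟨F.preimage ι ι.injective.injOn, by
    rw [Finset.map_eq_image, Finset.image_preimage]
    exact Finset.filter_true_of_mem fun x hx => hF hx⟩

section Complexes

variable {V W : Type}

theorem exists_isFacet_superset [Finite V] {Δ : Set (Finset V)} {F : Finset V} (hF : F ∈ Δ) :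
    ∃ K, IsFacet Δ K ∧ F ⊆ K := by
  obtain ⟨K, ⟨hK, hFK⟩, hmax⟩ :=
    Set.Finite.exists_maximalFor Finset.card {K | K ∈ Δ ∧ F ⊆ K} (Set.toFinite _)
      ⟨F, hF, subset_rfl⟩
  refine ⟨K, ⟨hK, fun G hG hKG => ?_⟩, hFK⟩
  exact Finset.eq_of_subset_of_card_le hKG (hmax ⟨hG, hFK.trans hKG⟩ (Finset.card_le_card hKG))

/-- Facets of `lk_Δ F` are `K \ F` for the facets `K ⊇ F` of `Δ`. -/
theorem IsFacet.exists_isFacet_card_add_card_eq [Finite V] {Δ : Set (Finset V)} {F H : Finset V}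
    (hH : IsFacet (linkC Δ F) H) : ∃ K, IsFacet Δ K ∧ H.card + F.card = K.card := by
  obtain ⟨⟨hdisj, hmem⟩, hmax⟩ := hH
  obtain ⟨K, hK, hsub⟩ := exists_isFacet_superset hmem
  have hFK : F ⊆ K := Finset.subset_union_right.trans hsub
  have hKF : K \ F ∈ linkC Δ F :=
    ⟨Finset.sdiff_disjoint, by rw [Finset.sdiff_union_of_subset hFK]; exact hK.1⟩
  have hHK : H = K \ F :=
    hmax _ hKF (Finset.subset_sdiff.mpr ⟨Finset.subset_union_left.trans hsub, hdisj⟩)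
  refine ⟨K, hK, ?_⟩
  rw [hHK, Finset.card_sdiff_of_subset hFK, Nat.sub_add_cancel (Finset.card_le_card hFK)]

theorem IsPure.linkC [Finite V] {Δ : Set (Finset V)} (hΔ : IsPure Δ) (F : Finset V) :
    IsPure (linkC Δ F) := by
  intro H₁ H₂ h₁ h₂
  obtain ⟨K₁, hK₁, e₁⟩ := h₁.exists_isFacet_card_add_card_eq
  obtain ⟨K₂, hK₂, e₂⟩ := h₂.exists_isFacet_card_add_card_eq
  have := hΔ K₁ K₂ hK₁ hK₂
  omega

theorem mem_linkC_iff_insert_mem {Δ : Set (Finset V)} {v : V} {H : Finset V} (hv : v ∉ H) :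
    H ∈ linkC Δ {v} ↔ insert v H ∈ Δ := by
  rw [linkC, Set.mem_ofPred, Finset.disjoint_singleton_right, Finset.union_comm,
    ← Finset.insert_eq]
  exact and_iff_right hv

theorem linkC_linkC (Δ : Set (Finset V)) {F H : Finset V} (hFH : Disjoint F H) :
    linkC (linkC Δ F) H = linkC Δ (F ∪ H) := by
  ext A
  simp only [linkC, Set.mem_ofPred, Finset.disjoint_union_left, Finset.disjoint_union_right]
  constructor
  · rintro ⟨hAH, ⟨hAF, -⟩, hmem⟩
    exact ⟨⟨hAF, hAH⟩, by rwa [Finset.union_assoc, Finset.union_comm H] at hmem⟩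
  · rintro ⟨⟨hAF, hAH⟩, hmem⟩
    exact ⟨hAH, ⟨hAF, hFH.symm⟩, by rwa [Finset.union_assoc, Finset.union_comm H]⟩

theorem linkC_linkC_singleton (Δ : Set (Finset V)) {v : V} {H : Finset V} (hv : v ∉ H) :
    linkC (linkC Δ {v}) H = linkC Δ (insert v H) := by
  rw [linkC_linkC Δ (Finset.disjoint_singleton_left.mpr hv), Finset.insert_eq]

theorem isCMt_iff_isPure_and_isCMt_linkC_singleton {k : Type} [Field k] [Fintype V]
    (Δ : Set (Finset V)) {t : ℕ} (ht : 1 ≤ t) :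
    IsCMt k Δ t ↔ IsPure Δ ∧ ∀ v, IsCMt k (linkC Δ {v}) (t - 1) := by
  refine ⟨fun ⟨hpure, hlinks⟩ =>
      ⟨hpure, fun v => ⟨hpure.linkC {v}, fun H hH hcard => ?_⟩⟩,
    fun ⟨hpure, hlinks⟩ => ⟨hpure, fun F hF hcard => ?_⟩⟩
  · have hv : v ∉ H := Finset.disjoint_singleton_right.mp hH.1
    rw [linkC_linkC_singleton Δ hv]
    refine hlinks _ ((mem_linkC_iff_insert_mem hv).mp hH) ?_
    rw [Finset.card_insert_of_notMem hv]
    omega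
  · obtain ⟨v, hv⟩ := Finset.card_pos.mp (by omega : 0 < F.card)
    have hv' : v ∉ F.erase v := Finset.notMem_erase v F
    have hlink := (hlinks v).2 (F.erase v)
      ((mem_linkC_iff_insert_mem hv').mpr (by rwa [Finset.insert_erase hv]))
      (by rw [Finset.card_erase_of_mem hv]; omega)
    rwa [linkC_linkC_singleton Δ hv', Finset.insert_erase hv] at hlink

theorem linkC_image_map (ι : W ↪ V) (Δ : Set (Finset W)) (B : Finset W) :
    linkC (Finset.map ι '' Δ) (B.map ι) = Finset.map ι '' linkC Δ B := by
  ext A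
  constructor
  · rintro ⟨hdisj, C, hC, hCA⟩
    obtain ⟨A', rfl⟩ := Finset.exists_map_eq_of_coe_subset_range ι <|
      (Finset.coe_subset.mpr (hCA ▸ Finset.subset_union_left)).trans
        (Finset.coe_map_subset_range ι C)
    rw [← Finset.map_union, Finset.map_inj] at hCA
    exact ⟨A', ⟨(Finset.disjoint_map ι).mp hdisj, hCA ▸ hC⟩, rfl⟩
  · rintro ⟨A', ⟨hdisj, hmem⟩, rfl⟩
    exact ⟨(Finset.disjoint_map ι).mpr hdisj, A' ∪ B, hmem, Finset.map_union _ _⟩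

theorem isFacet_image_map_iff (ι : W ↪ V) (Δ : Set (Finset W)) (B : Finset W) :
    IsFacet (Finset.map ι '' Δ) (B.map ι) ↔ IsFacet Δ B := by
  simp only [IsFacet, (Finset.map_injective ι).mem_set_image, Set.forall_mem_image,
    Finset.map_subset_map, Finset.map_inj]

theorem isPure_image_map_iff (ι : W ↪ V) (Δ : Set (Finset W)) :
    IsPure (Finset.map ι '' Δ) ↔ IsPure Δ := by
  refine ⟨fun h B₁ B₂ h₁ h₂ => ?_, fun h A₁ A₂ h₁ h₂ => ?_⟩
  · simpa using h _ _ ((isFacet_image_map_iff ι Δ B₁).mpr h₁)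
      ((isFacet_image_map_iff ι Δ B₂).mpr h₂)
  · obtain ⟨B₁, -, rfl⟩ := h₁.1
    obtain ⟨B₂, -, rfl⟩ := h₂.1
    simpa using h _ _ ((isFacet_image_map_iff ι Δ B₁).mp h₁)
      ((isFacet_image_map_iff ι Δ B₂).mp h₂)

end Complexes

section StanleyReisner

variable {k : Type} [Field k] {V W : Type} [Fintype V] [Fintype W]

theorem SRIdeal_le_comap_rename (ι : W ↪ V) (Δ : Set (Finset W)) :
    SRIdeal k Δ ≤ (SRIdeal k (Finset.map ι '' Δ)).comap (rename ι) := by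
  rw [SRIdeal, Ideal.span_le]
  rintro _ ⟨F, hF, rfl⟩
  refine Ideal.subset_span ⟨F.map ι, ?_, by simp [Finset.prod_map]⟩
  rintro ⟨B, hB, hBF⟩
  exact hF (Finset.map_injective ι hBF ▸ hB)

theorem SRIdeal_image_map_le_comap_aeval (ι : W ↪ V) (Δ : Set (Finset W)) :
    SRIdeal k (Finset.map ι '' Δ) ≤
      (SRIdeal k Δ).comap (aeval (Function.extend ι X 0 : V → MvPolynomial W k)) := by
  rw [SRIdeal, Ideal.span_le]
  rintro _ ⟨F, hF, rfl⟩
  simp only [SetLike.mem_coe, Ideal.mem_comap, map_prod, aeval_X]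
  by_cases hsub : (F : Set V) ⊆ Set.range ι
  · obtain ⟨B, rfl⟩ := Finset.exists_map_eq_of_coe_subset_range ι hsub
    rw [Finset.prod_map]
    simp only [ι.injective.extend_apply]
    exact Ideal.subset_span ⟨B, fun hB => hF ⟨B, hB, rfl⟩, rfl⟩
  · obtain ⟨x, hxF, hx⟩ := Set.not_subset.mp hsub
    rw [Finset.prod_eq_zero hxF (Function.extend_apply' _ _ _ hx)]
    exact zero_mem _

/-- Off the image of `ι` the variables vanish in `k[ι Δ]`, since those vertices are not faces;
so `k[ι Δ] ≅ k[Δ]` by renaming variables along `ι` and sending the others to `0`. -/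
noncomputable def srRingEquivImageMap (ι : W ↪ V) (Δ : Set (Finset W)) :
    SRRing k (Finset.map ι '' Δ) ≃+* SRRing k Δ :=
  RingEquiv.ofRingHom
    (Ideal.quotientMap _ (aeval (Function.extend ι X 0)).toRingHom
      (SRIdeal_image_map_le_comap_aeval ι Δ))
    (Ideal.quotientMap _ (rename ι).toRingHom (SRIdeal_le_comap_rename ι Δ))
    (by
      ext w
      · simp [Ideal.quotientMap_mk]
      · simp [Ideal.quotientMap_mk, ι.injective.extend_apply])
    (by
      ext v
      · simp [Ideal.quotientMap_mk]
      · by_cases hv : ∃ w, ι w = v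
        · obtain ⟨w, rfl⟩ := hv
          simp [Ideal.quotientMap_mk, ι.injective.extend_apply]
        · have hX : Ideal.Quotient.mk (SRIdeal k (Finset.map ι '' Δ)) (X v) = 0 := by
            refine Ideal.Quotient.eq_zero_iff_mem.mpr (Ideal.subset_span ⟨{v}, ?_, by simp⟩)
            rintro ⟨B, -, hB⟩
            obtain ⟨w, -, hw⟩ := Finset.mem_map.mp (hB ▸ Finset.mem_singleton_self v)
            exact hv ⟨w, hw⟩
          simp [hX])

theorem srRingEquivImageMap_mk_X (ι : W ↪ V) (Δ : Set (Finset W)) (v : V) :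
    srRingEquivImageMap ι Δ (Ideal.Quotient.mk _ (X v)) =
      Ideal.Quotient.mk (SRIdeal k Δ) (Function.extend ι X 0 v) := by
  simp [srRingEquivImageMap, Ideal.quotientMap_mk]

theorem srRingEquivImageMap_symm_mk_X (ι : W ↪ V) (Δ : Set (Finset W)) (w : W) :
    (srRingEquivImageMap ι Δ).symm (Ideal.Quotient.mk _ (X w)) =
      Ideal.Quotient.mk (SRIdeal k (Finset.map ι '' Δ)) (X (ι w)) := by
  simp [srRingEquivImageMap, Ideal.quotientMap_mk]

theorem IsCM.of_ringEquiv {Δ : Set (Finset V)} {Δ' : Set (Finset W)}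
    (e : SRRing k Δ ≃+* SRRing k Δ')
    (he : ∀ v : V, e (Ideal.Quotient.mk _ (X v)) ∈
      Ideal.span (Set.range fun w : W => Ideal.Quotient.mk (SRIdeal k Δ') (X w)))
    (hCM : IsCM k Δ) : IsCM k Δ' := by
  obtain ⟨rs, hmem, hreg, hlen⟩ := hCM
  refine ⟨rs.map e, ?_, ?_, ?_⟩
  · have hspan : Ideal.map e (Ideal.span (Set.range fun v : V =>
        Ideal.Quotient.mk (SRIdeal k Δ) (X v))) ≤
        Ideal.span (Set.range fun w : W => Ideal.Quotient.mk (SRIdeal k Δ') (X w)) := by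
      rw [Ideal.map_span, Ideal.span_le]
      rintro _ ⟨_, ⟨v, rfl⟩, rfl⟩
      exact he v
    simp only [List.mem_map]
    rintro _ ⟨r, hr, rfl⟩
    exact hspan (Ideal.mem_map_of_mem _ (hmem r hr))
  · refine (AddEquiv.isRegular_congr (e := e.toAddEquiv) ?_).mp hreg
    exact List.forall₂_map_right_iff.mpr (List.forall₂_same.mpr fun r _ x => map_mul e r x)
  · rw [List.length_map, hlen, ringKrullDim_eq_of_ringEquiv e]

theorem isCM_image_map_iff (ι : W ↪ V) (Δ : Set (Finset W)) :
    IsCM k (Finset.map ι '' Δ) ↔ IsCM k Δ := by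
  refine ⟨IsCM.of_ringEquiv (srRingEquivImageMap ι Δ) fun v => ?_,
    IsCM.of_ringEquiv (srRingEquivImageMap ι Δ).symm fun w => ?_⟩
  · rw [srRingEquivImageMap_mk_X]
    by_cases hv : ∃ w, ι w = v
    · obtain ⟨w, rfl⟩ := hv
      rw [ι.injective.extend_apply]
      exact Ideal.subset_span ⟨w, rfl⟩
    · rw [Function.extend_apply' _ _ _ hv, Pi.zero_apply, map_zero]
      exact zero_mem _
  · rw [srRingEquivImageMap_symm_mk_X]
    exact Ideal.subset_span ⟨ι w, rfl⟩

theorem isCMt_image_map_iff (ι : W ↪ V) (Δ : Set (Finset W)) (t : ℕ) :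
    IsCMt k (Finset.map ι '' Δ) t ↔ IsCMt k Δ t := by
  simp only [IsCMt, isPure_image_map_iff, Set.forall_mem_image, Finset.card_map, linkC_image_map,
    isCM_image_map_iff]

end StanleyReisner

section Graph

variable {V : Type} (G : SimpleGraph V)

theorem insert_mem_indC_iff {v : V} {A : Finset V} :
    insert v A ∈ indC G ↔ A ∈ indC G ∧ ∀ a ∈ A, ¬ G.Adj v a := by
  simp only [indC, Set.mem_ofPred, Finset.forall_mem_insert, G.irrefl, not_false_eq_true, true_and,
    G.adj_comm _ v, imp_and, forall_and]
  tauto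

theorem map_subtype_mem_indC_iff {s : Set V} {B : Finset s} :
    B.map (Function.Embedding.subtype _) ∈ indC G ↔ B ∈ indC (G.induce s) := by
  simp [indC]

theorem mem_compl_closedNbhd_iff {v a : V} :
    a ∈ (closedNbhd G v)ᶜ ↔ a ≠ v ∧ ¬ G.Adj v a := by
  simp [closedNbhd, not_or]

theorem linkC_indC_singleton (v : V) :
    linkC (indC G) {v} = Finset.map (Function.Embedding.subtype _) '' indC (delNbhd G v) := by
  ext A
  constructor
  · rintro ⟨hdisj, hA⟩
    rw [Finset.union_comm, ← Finset.insert_eq, insert_mem_indC_iff] at hA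
    obtain ⟨B, rfl⟩ := Finset.exists_map_eq_of_coe_subset_range (Function.Embedding.subtype _)
      fun a ha => ⟨⟨a, (mem_compl_closedNbhd_iff G).mpr
        ⟨by rintro rfl; exact Finset.disjoint_singleton_right.mp hdisj ha, hA.2 a ha⟩⟩, rfl⟩
    exact ⟨B, (map_subtype_mem_indC_iff G).mp hA.1, rfl⟩
  · rintro ⟨B, hB, rfl⟩
    have hB' : ∀ a ∈ B.map (Function.Embedding.subtype _), a ≠ v ∧ ¬ G.Adj v a :=
      Finset.forall_mem_map.mpr fun a _ => (mem_compl_closedNbhd_iff G).mp a.2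
    have hv : v ∉ B.map (Function.Embedding.subtype _) := fun h => (hB' v h).1 rfl
    rw [mem_linkC_iff_insert_mem hv, insert_mem_indC_iff]
    exact ⟨(map_subtype_mem_indC_iff G).mpr hB, fun a ha => (hB' a ha).2⟩

end Graph

/-- A graph is `CM_t` (`t ≥ 1`) iff it is unmixed and `G \ N[v]` is `CM_{t-1}` for
every vertex `v`. -/
theorem graph_isCMt_iff (k : Type) [Field k] {V : Type} [Fintype V]
    (G : SimpleGraph V) (t : ℕ) (ht : 1 ≤ t) :
    IsCMt k (indC G) t ↔
      (Unmixed G ∧ ∀ v : V, IsCMt k (indC (delNbhd G v)) (t - 1)) := by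
  simp only [isCMt_iff_isPure_and_isCMt_linkC_singleton _ ht, linkC_indC_singleton,
    isCMt_image_map_iff, Unmixed]
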